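/- arXiv:1405.5754 — 4 statements merged into one kernel-verified Lean document; each statement's English description precedes it below -/
import Mathlib

section
/- For every n ≥ 1, S(n+1) ≥ S(n) + ⌈log₂ n⌉. -/
/-- Applying a single comparator `c = (i, j)`: the minimum of the two values goes to
channel `i` and the maximum to channel `j`. -/
def applyComp {n : ℕ} {α : Type*} [LinearOrder α] (c : Fin n × Fin n) (x : Fin n → α) :
    Fin n → α :=
  fun k => if k = c.1 then min (x c.1) (x c.2)
    else if k = c.2 then max (x c.1) (x c.2)
    else x k

/-- Propagating an input vector through a comparator network (a list of comparators). -/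
def runNet {n : ℕ} {α : Type*} [LinearOrder α] (C : List (Fin n × Fin n)) (x : Fin n → α) :
    Fin n → α :=
  C.foldl (fun v c => applyComp c v) x

/-- A standard comparator network: every comparator `(i, j)` satisfies `i < j`. -/
def Standard {n : ℕ} (C : List (Fin n × Fin n)) : Prop :=
  ∀ c ∈ C, c.1 < c.2

/-- A sorting network: a standard comparator network sorting every Boolean input. -/
def IsSortingNet {n : ℕ} (C : List (Fin n × Fin n)) : Prop :=
  Standard C ∧ ∀ x : Fin n → Bool, Monotone (runNet C x)

/-- The set of outputs of a comparator network on Boolean inputs. -/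
def outputs {n : ℕ} (C : List (Fin n × Fin n)) : Set (Fin n → Bool) :=
  Set.range (runNet C)

/-- The action of a permutation of channels on a set of Boolean vectors. -/
def permSet {n : ℕ} (π : Equiv.Perm (Fin n)) (S : Set (Fin n → Bool)) :
    Set (Fin n → Bool) :=
  (fun x => x ∘ ⇑π.symm) '' S

/-- `Ca` subsumes `Cb`: some permutation maps `outputs Ca` into `outputs Cb`. -/
def Subsumes {n : ℕ} (Ca Cb : List (Fin n × Fin n)) : Prop :=
  ∃ π : Equiv.Perm (Fin n), permSet π (outputs Ca) ⊆ outputs Cb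

/-- `sortSize n` is the least size of a sorting network on `n` channels. -/
noncomputable def sortSize (n : ℕ) : ℕ :=
  sInf {k | ∃ C : List (Fin n × Fin n), IsSortingNet C ∧ C.length = k}

/-- Number of ones in a Boolean vector. -/
def ones {n : ℕ} (x : Fin n → Bool) : ℕ :=
  (Finset.univ.filter fun i => x i = true).card

/-- A (finite) complete set of filters on `n` channels. -/
def CompleteFilters (n : ℕ) (F : Finset (List (Fin n × Fin n))) : Prop :=
  (∃ C : List (Fin n × Fin n), IsSortingNet C ∧ C.length = sortSize n) ↔
    (∃ C ∈ F, ∃ C' : List (Fin n × Fin n),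
      IsSortingNet (C ++ C') ∧ (C ++ C').length = sortSize n)

/-- `wSet C x k` is the set of positions `i` such that some output vector of `C`
with exactly `k` ones has value `x` at position `i`. -/
def wSet {n : ℕ} (C : List (Fin n × Fin n)) (x : Bool) (k : ℕ) : Set (Fin n) :=
  {i | ∃ v ∈ outputs C, ones v = k ∧ v i = x}

/-!
Follow the maximum through an optimal sorting network `C` on `n + 1` channels. A single `1`
entering on channel `p` travels along a path that ends on the top channel; two paths that meet
at a comparator continue together, whence Kraft's inequality `∑ₚ 2^(-hits p) ≤ 1`, and some
path meets at least `log₂ (n + 1)` comparators. When the input on the start `j` of that path is a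
maximum, each comparator on the path either does nothing or swaps its two channels. Deleting
these comparators together with channel `j`, relabelling the remaining ones accordingly and
untangling the result leaves a standard network on `n` channels that still sorts, of size at
most `|C| - ⌈log₂ n⌉`.
-/

section Semantics

variable {m : ℕ} {α : Type*} [LinearOrder α]

@[simp] lemma runNet_nil (x : Fin m → α) : runNet [] x = x := rfl

@[simp] lemma runNet_cons (c : Fin m × Fin m) (C : List (Fin m × Fin m)) (x : Fin m → α) :
    runNet (c :: C) x = runNet C (applyComp c x) := rfl

lemma runNet_append (A B : List (Fin m × Fin m)) (x : Fin m → α) :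
    runNet (A ++ B) x = runNet B (runNet A x) := by
  simp [runNet, List.foldl_append]

lemma applyComp_of_le {c : Fin m × Fin m} {x : Fin m → α} (h : x c.1 ≤ x c.2) :
    applyComp c x = x := by
  funext i
  simp only [applyComp]
  split_ifs with h1 h2 <;> simp_all

lemma applyComp_of_ge {c : Fin m × Fin m} {x : Fin m → α} (h : x c.2 ≤ x c.1) :
    applyComp c x = x ∘ Equiv.swap c.1 c.2 := by
  funext i
  simp only [applyComp, Function.comp_apply]
  split_ifs with h1 h2
  · simp [h1, h]
  · simp [h2, h]
  · rw [Equiv.swap_apply_of_ne_of_ne h1 h2]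

lemma applyComp_apply_of_ne {c : Fin m × Fin m} {x : Fin m → α} {i : Fin m}
    (h1 : i ≠ c.1) (h2 : i ≠ c.2) : applyComp c x i = x i := by
  simp [applyComp, h1, h2]

lemma applyComp_swap (a b : Fin m) (x : Fin m → α) :
    applyComp (a, b) x = applyComp (b, a) x ∘ Equiv.swap a b := by
  rcases le_total (x a) (x b) with h | h
  · rw [applyComp_of_le (c := (a, b)) h, applyComp_of_ge (c := (b, a)) h]
    funext i
    simp [Equiv.swap_comm a b]
  · rw [applyComp_of_ge (c := (a, b)) h, applyComp_of_le (c := (b, a)) h]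

lemma exists_applyComp_eq_comp_perm (c : Fin m × Fin m) (x : Fin m → α) :
    ∃ τ : Equiv.Perm (Fin m), applyComp c x = x ∘ τ := by
  rcases le_total (x c.1) (x c.2) with h | h
  · exact ⟨1, applyComp_of_le h⟩
  · exact ⟨_, applyComp_of_ge h⟩

lemma exists_runNet_eq_comp_perm (C : List (Fin m × Fin m)) (x : Fin m → α) :
    ∃ τ : Equiv.Perm (Fin m), runNet C x = x ∘ τ := by
  induction C generalizing x with
  | nil => exact ⟨1, rfl⟩
  | cons c C ih =>
    obtain ⟨τ₀, h₀⟩ := exists_applyComp_eq_comp_perm c x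
    obtain ⟨τ₁, h₁⟩ := ih (applyComp c x)
    exact ⟨τ₁.trans τ₀, by rw [runNet_cons, h₁, h₀]; rfl⟩

lemma runNet_apply_of_forall_ne {C : List (Fin m × Fin m)} {i : Fin m}
    (hC : ∀ c ∈ C, i ≠ c.1 ∧ i ≠ c.2) (x : Fin m → α) : runNet C x i = x i := by
  induction C generalizing x with
  | nil => rfl
  | cons c C ih =>
    obtain ⟨h1, h2⟩ := hC c List.mem_cons_self
    rw [runNet_cons, ih (fun d hd => hC d (List.mem_cons_of_mem c hd)),
      applyComp_apply_of_ne h1 h2]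

lemma runNet_of_standard_of_monotone {C : List (Fin m × Fin m)} (hC : Standard C)
    {x : Fin m → α} (hx : Monotone x) : runNet C x = x := by
  induction C with
  | nil => rfl
  | cons c C ih =>
    rw [runNet_cons, applyComp_of_le (hx (hC c List.mem_cons_self).le)]
    exact ih fun d hd => hC d (List.mem_cons_of_mem c hd)

end Semantics

section Relabel

variable {m k : ℕ} {α : Type*} [LinearOrder α]

def relabel (f : Fin m → Fin k) (C : List (Fin m × Fin m)) : List (Fin k × Fin k) :=
  C.map (Prod.map f f)

@[simp] lemma length_relabel (f : Fin m → Fin k) (C : List (Fin m × Fin m)) :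
    (relabel f C).length = C.length :=
  List.length_map _

lemma applyComp_comp {f : Fin m → Fin k} (hf : Function.Injective f) (c : Fin m × Fin m)
    (x : Fin k → α) : applyComp (f c.1, f c.2) x ∘ f = applyComp c (x ∘ f) := by
  funext i
  simp [applyComp, hf.eq_iff]

lemma runNet_relabel_comp {f : Fin m → Fin k} (hf : Function.Injective f)
    (C : List (Fin m × Fin m)) (x : Fin k → α) :
    runNet (relabel f C) x ∘ f = runNet C (x ∘ f) := by
  induction C generalizing x with
  | nil => rfl
  | cons c C ih =>
    simp only [relabel, List.map_cons, runNet_cons] at ih ⊢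
    rw [ih, Prod.map, applyComp_comp hf]

lemma runNet_comp_perm (σ : Equiv.Perm (Fin m)) (C : List (Fin m × Fin m)) (x : Fin m → α) :
    runNet C (x ∘ σ) = runNet (relabel σ C) x ∘ σ :=
  (runNet_relabel_comp σ.injective C x).symm

lemma standard_relabel {f : Fin m → Fin k} (hf : StrictMono f) {C : List (Fin m × Fin m)}
    (hC : Standard C) : Standard (relabel f C) := by
  simp only [Standard, relabel, List.mem_map]
  rintro _ ⟨c, hc, rfl⟩
  exact hf (hC c hc)

lemma applyComp_castSucc_snoc (c : Fin m × Fin m) (y : Fin m → α) (a : α) :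
    applyComp (c.1.castSucc, c.2.castSucc) (Fin.snoc y a) = Fin.snoc (applyComp c y) a := by
  rw [← Fin.snoc_init_self (applyComp _ _), applyComp_apply_of_ne
    (Fin.castSucc_lt_last _).ne' (Fin.castSucc_lt_last _).ne', Fin.snoc_last]
  congr 1
  exact (applyComp_comp (Fin.castSucc_injective m) c _).trans (by rw [Fin.snoc_comp_castSucc])

lemma runNet_relabel_castSucc (C : List (Fin m × Fin m)) (x : Fin (m + 1) → α) :
    runNet (relabel Fin.castSucc C) x = Fin.snoc (runNet C (Fin.init x)) (x (Fin.last m)) := by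
  rw [← Fin.snoc_init_self (runNet _ x)]
  congr 1
  · exact runNet_relabel_comp (Fin.castSucc_injective m) C x
  · refine runNet_apply_of_forall_ne ?_ x
    simp only [relabel, List.mem_map]
    rintro _ ⟨c, -, rfl⟩
    exact ⟨(Fin.castSucc_lt_last _).ne', (Fin.castSucc_lt_last _).ne'⟩

end Relabel

section Ones

variable {m : ℕ}

lemma ones_comp_perm (x : Fin m → Bool) (τ : Equiv.Perm (Fin m)) : ones (x ∘ τ) = ones x := by
  simp only [ones, Finset.card_filter]
  exact Equiv.sum_comp τ fun i => if x i = true then 1 else 0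

lemma ones_runNet (C : List (Fin m × Fin m)) (x : Fin m → Bool) :
    ones (runNet C x) = ones x := by
  obtain ⟨τ, h⟩ := exists_runNet_eq_comp_perm C x
  rw [h, ones_comp_perm]

lemma ones_snoc_true (y : Fin m → Bool) :
    ones (Fin.snoc y true : Fin (m + 1) → Bool) = ones y + 1 := by
  simp only [ones, Finset.card_filter, Fin.sum_univ_castSucc, Fin.snoc_castSucc, Fin.snoc_last]
  rfl

lemma ones_lt_ones_of_monotone {x y : Fin m → Bool} (hx : Monotone x) (hy : Monotone y)
    {i : Fin m} (hxi : x i = false) (hyi : y i = true) : ones x < ones y := by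
  calc ones x ≤ (Finset.Ioi i).card := by
        refine Finset.card_le_card fun j hj => ?_
        simp only [Finset.mem_filter, Finset.mem_univ, true_and, Finset.mem_Ioi] at hj ⊢
        by_contra! hji
        simp [Bool.eq_false_of_le_false (hxi ▸ hx hji)] at hj
    _ < (Finset.Ici i).card :=
        Finset.card_lt_card (Finset.coe_ssubset.1 (by simpa using Set.Ioi_ssubset_Ici_self))
    _ ≤ ones y := by
        refine Finset.card_le_card fun j hj => ?_
        simp only [Finset.mem_filter, Finset.mem_univ, true_and, Finset.mem_Ici] at hj ⊢
        exact Bool.eq_true_of_true_le (hyi ▸ hy hj)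

lemma Monotone.eq_of_ones_eq {x y : Fin m → Bool} (hx : Monotone x) (hy : Monotone y)
    (h : ones x = ones y) : x = y := by
  funext i
  cases hxi : x i <;> cases hyi : y i
  · rfl
  · exact absurd h (ones_lt_ones_of_monotone hx hy hxi hyi).ne
  · exact absurd h (ones_lt_ones_of_monotone hy hx hyi hxi).ne'
  · rfl

end Ones

section Existence

lemma Monotone.snoc {m : ℕ} {α : Type*} [Preorder α] {w : Fin m → α} (hw : Monotone w)
    {a : α} (ha : ∀ i, w i ≤ a) : Monotone (Fin.snoc w a : Fin (m + 1) → α) := by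
  intro i j hij
  induction j using Fin.lastCases with
  | last =>
    induction i using Fin.lastCases with
    | last => exact le_rfl
    | cast i => simpa using ha i
  | cast j =>
    induction i using Fin.lastCases with
    | last => exact absurd hij (Fin.castSucc_lt_last j).not_ge
    | cast i => simpa using hw (Fin.castSucc_le_castSucc_iff.1 hij)

/-- The comparators `(0,1), (1,2), …, (m-1,m)`, which carry a maximum to the top channel. -/
def bubbleChain : (m : ℕ) → List (Fin (m + 1) × Fin (m + 1))
  | 0 => []
  | m + 1 => relabel Fin.castSucc (bubbleChain m) ++ [((Fin.last m).castSucc, Fin.last (m + 1))]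

lemma standard_bubbleChain : (m : ℕ) → Standard (bubbleChain m)
  | 0 => by simp [Standard, bubbleChain]
  | m + 1 => by
    intro c hc
    simp only [bubbleChain, List.mem_append, List.mem_singleton] at hc
    rcases hc with hc | rfl
    · exact standard_relabel Fin.strictMono_castSucc (standard_bubbleChain m) c hc
    · exact Fin.castSucc_lt_last _

lemma runNet_bubbleChain_last {m : ℕ} {x : Fin (m + 1) → Bool} {i : Fin (m + 1)}
    (hi : x i = true) : runNet (bubbleChain m) x (Fin.last m) = true := by
  induction m with
  | zero => simpa [bubbleChain, Fin.fin_one_eq_zero i] using hi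
  | succ m ih =>
    have hne : Fin.last (m + 1) ≠ (Fin.last m).castSucc := (Fin.castSucc_lt_last _).ne'
    simp only [bubbleChain, runNet_append, runNet_relabel_castSucc, runNet_cons, runNet_nil,
      applyComp, if_neg hne, if_true, Fin.snoc_last, Fin.snoc_castSucc]
    induction i using Fin.lastCases with
    | last => simp [hi]
    | cast k => simp [ih (x := Fin.init x) (i := k) hi]

def selectionSort : (m : ℕ) → List (Fin m × Fin m)
  | 0 => []
  | m + 1 => bubbleChain m ++ relabel Fin.castSucc (selectionSort m)

lemma isSortingNet_selectionSort : (m : ℕ) → IsSortingNet (selectionSort m)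
  | 0 => ⟨by simp [Standard, selectionSort], fun _ i => i.elim0⟩
  | m + 1 => by
    obtain ⟨hstd, hsort⟩ := isSortingNet_selectionSort m
    refine ⟨?_, fun x => ?_⟩
    · intro c hc
      rcases List.mem_append.1 hc with hc | hc
      · exact standard_bubbleChain m c hc
      · exact standard_relabel Fin.strictMono_castSucc hstd c hc
    by_cases hx : ∃ i, x i = true
    · obtain ⟨i, hi⟩ := hx
      rw [selectionSort, runNet_append, runNet_relabel_castSucc, runNet_bubbleChain_last hi]
      exact (hsort _).snoc fun _ => le_top
    · have hx : x = fun _ => false := funext fun i => by simpa using fun h => hx ⟨i, h⟩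
      obtain ⟨τ, hτ⟩ := exists_runNet_eq_comp_perm (selectionSort (m + 1)) x
      rw [hτ, hx]
      exact monotone_const

lemma exists_isSortingNet_length_eq_sortSize (m : ℕ) :
    ∃ C : List (Fin m × Fin m), IsSortingNet C ∧ C.length = sortSize m :=
  Nat.sInf_mem (s := {k | ∃ C : List (Fin m × Fin m), IsSortingNet C ∧ C.length = k})
    ⟨_, _, isSortingNet_selectionSort m, rfl⟩

end Existence

section Token

variable {m k : ℕ}

/-- The channel holding a single `1`, initially on channel `p`, after the comparator `c`. -/
def tokenStep (p : Fin m) (c : Fin m × Fin m) : Fin m :=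
  if p = c.1 ∨ p = c.2 then c.2 else p

def tokenEnd (p : Fin m) (C : List (Fin m × Fin m)) : Fin m :=
  C.foldl tokenStep p

@[simp] lemma tokenEnd_cons (p : Fin m) (c : Fin m × Fin m) (C : List (Fin m × Fin m)) :
    tokenEnd p (c :: C) = tokenEnd (tokenStep p c) C := rfl

def tokenHits (p : Fin m) : List (Fin m × Fin m) → ℕ
  | [] => 0
  | c :: C => (if p = c.1 ∨ p = c.2 then 1 else 0) + tokenHits (tokenStep p c) C

lemma tokenHits_cons_of_hit {p : Fin m} {c : Fin m × Fin m} (h : p = c.1 ∨ p = c.2)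
    (C : List (Fin m × Fin m)) : tokenHits p (c :: C) = tokenHits c.2 C + 1 := by
  simp only [tokenHits, tokenStep, if_pos h]
  omega

lemma tokenHits_cons_of_not_hit {p : Fin m} {c : Fin m × Fin m} (h : ¬(p = c.1 ∨ p = c.2))
    (C : List (Fin m × Fin m)) : tokenHits p (c :: C) = tokenHits p C := by
  simp only [tokenHits, tokenStep, if_neg h, zero_add]

lemma tokenHits_relabel {f : Fin m → Fin k} (hf : Function.Injective f) (p : Fin m)
    (C : List (Fin m × Fin m)) : tokenHits (f p) (relabel f C) = tokenHits p C := by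
  induction C generalizing p with
  | nil => rfl
  | cons c C ih =>
    have hstep : tokenStep (f p) (f c.1, f c.2) = f (tokenStep p c) := by
      simp only [tokenStep, hf.eq_iff]
      split_ifs <;> rfl
    change tokenHits (f p) ((f c.1, f c.2) :: relabel f C) = _
    simp only [tokenHits, hf.eq_iff, hstep, ih]

def unitVec (p : Fin m) : Fin m → Bool :=
  fun i => decide (i = p)

lemma applyComp_unitVec (c : Fin m × Fin m) (p : Fin m) :
    applyComp c (unitVec p) = unitVec (tokenStep p c) := by
  obtain ⟨a, b⟩ := c
  funext i
  simp only [applyComp, unitVec, tokenStep]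
  by_cases hpa : p = a <;> by_cases hpb : p = b <;> by_cases hia : i = a <;>
    by_cases hib : i = b <;> simp_all <;> grind

lemma runNet_unitVec (C : List (Fin m × Fin m)) (p : Fin m) :
    runNet C (unitVec p) = unitVec (tokenEnd p C) := by
  induction C generalizing p with
  | nil => rfl
  | cons c C ih => rw [runNet_cons, applyComp_unitVec, ih]; rfl

lemma ones_unitVec (p : Fin m) : ones (unitVec p) = 1 := by
  simp [ones, unitVec, Finset.filter_eq']

lemma monotone_unitVec_last : Monotone (unitVec (Fin.last m)) := by
  intro i j hij
  by_cases hi : i = Fin.last m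
  · simp [unitVec, hi, (Fin.last_le_iff.1 (hi ▸ hij))]
  · simp [unitVec, hi]

lemma tokenEnd_eq_last {C : List (Fin (m + 1) × Fin (m + 1))} (hC : IsSortingNet C)
    (p : Fin (m + 1)) : tokenEnd p C = Fin.last m := by
  have h := (hC.2 (unitVec p)).eq_of_ones_eq monotone_unitVec_last
    (by rw [ones_runNet, ones_unitVec, ones_unitVec])
  rw [runNet_unitVec] at h
  simpa [unitVec] using congrFun h (tokenEnd p C)

/-- Kraft's inequality: two token paths that meet at a comparator leave it together. -/
lemma sum_tokenHits_le_one (C : List (Fin m × Fin m)) (hC : ∀ c ∈ C, c.1 ≠ c.2) (z : Fin m) :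
    ∑ p, (if tokenEnd p C = z then (2⁻¹ : ℚ) ^ tokenHits p C else 0) ≤ 1 := by
  induction C with
  | nil => simp [tokenEnd, tokenHits]
  | cons c C ih =>
    set g : Fin m → ℚ := fun p => if tokenEnd p C = z then 2⁻¹ ^ tokenHits p C else 0
    set f : Fin m → ℚ := fun p =>
      if tokenEnd p (c :: C) = z then 2⁻¹ ^ tokenHits p (c :: C) else 0
    have hf : ∀ p, f p = if p = c.1 ∨ p = c.2 then g c.2 / 2 else g p := by
      intro p
      by_cases hp : p = c.1 ∨ p = c.2
      · simp only [f, g, tokenEnd_cons, tokenStep, if_pos hp, tokenHits_cons_of_hit hp, pow_succ]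
        split_ifs <;> ring
      · simp only [f, g, tokenEnd_cons, tokenStep, if_neg hp, tokenHits_cons_of_not_hit hp]
    have hsum : ∑ p, (f p - g p) = - g c.1 := by
      rw [Fintype.sum_eq_add c.1 c.2 (hC c List.mem_cons_self) fun p hp => by simp [hf, hp.1, hp.2]]
      simp only [hf, true_or, or_true, if_true]
      ring
    have hg : 0 ≤ g c.1 := by positivity
    rw [Finset.sum_sub_distrib] at hsum
    linarith [ih fun d hd => hC d (List.mem_cons_of_mem c hd)]

lemma exists_le_two_pow_tokenHits {C : List (Fin (m + 1) × Fin (m + 1))} (hC : IsSortingNet C) :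
    ∃ j, m + 1 ≤ 2 ^ tokenHits j C := by
  obtain ⟨j, -, hj⟩ := Finset.exists_max_image Finset.univ (tokenHits · C) Finset.univ_nonempty
  refine ⟨j, ?_⟩
  have hkraft := sum_tokenHits_le_one C (fun c hc => (hC.1 c hc).ne) (Fin.last m)
  simp only [tokenEnd_eq_last hC, if_true] at hkraft
  have hle :
      ∑ _p : Fin (m + 1), (2⁻¹ : ℚ) ^ tokenHits j C ≤ ∑ p, (2⁻¹ : ℚ) ^ tokenHits p C :=
    Finset.sum_le_sum fun p _ =>
      pow_le_pow_of_le_one (by norm_num) (by norm_num) (hj p (Finset.mem_univ p))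
  rw [Finset.sum_const, Finset.card_univ, Fintype.card_fin, nsmul_eq_mul, inv_pow] at hle
  have hpos : (0 : ℚ) < 2 ^ tokenHits j C := by positivity
  exact_mod_cast (div_le_one hpos).1 (hle.trans hkraft)

end Token

section Reduction

variable {m : ℕ}

/-- Delete the top channel from a network whose top input is a maximum: a comparator that moves
this maximum down is replaced by relabelling the rest of the network. -/
def eraseTop : List (Fin (m + 1) × Fin (m + 1)) → List (Fin m × Fin m)
  | [] => []
  | c :: C =>
    if h1 : c.1 = Fin.last m then eraseTop (relabel (Equiv.swap c.1 c.2) C)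
    else if h2 : c.2 = Fin.last m then eraseTop C
    else (c.1.castPred h1, c.2.castPred h2) :: eraseTop C
termination_by C => C.length
decreasing_by all_goals simp

lemma length_eraseTop_add_tokenHits (C : List (Fin (m + 1) × Fin (m + 1))) :
    (eraseTop C).length + tokenHits (Fin.last m) C = C.length := by
  induction C using eraseTop.induct with
  | case1 => simp [eraseTop, tokenHits]
  | case2 c C h1 ih =>
    have hhits := tokenHits_relabel (Equiv.swap c.1 c.2).injective c.2 C
    rw [Equiv.swap_apply_right] at hhits
    rw [← h1, length_relabel, hhits] at ih
    rw [eraseTop, dif_pos h1, tokenHits_cons_of_hit (Or.inl h1.symm), List.length_cons]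
    omega
  | case3 c C h1 h2 ih =>
    rw [eraseTop, dif_neg h1, dif_pos h2, tokenHits_cons_of_hit (Or.inr h2.symm), h2,
      List.length_cons]
    omega
  | case4 c C h1 h2 ih =>
    have hne : ¬(Fin.last m = c.1 ∨ Fin.last m = c.2) := by
      rintro (h | h) <;> simp_all
    rw [eraseTop, dif_neg h1, dif_neg h2, tokenHits_cons_of_not_hit hne, List.length_cons,
      List.length_cons]
    omega

lemma exists_runNet_snoc_true_eq_eraseTop (C : List (Fin (m + 1) × Fin (m + 1))) :
    ∃ π : Equiv.Perm (Fin (m + 1)), ∀ y : Fin m → Bool,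
      runNet C (Fin.snoc y true) = Fin.snoc (runNet (eraseTop C) y) true ∘ π := by
  induction C using eraseTop.induct with
  | case1 => exact ⟨1, fun y => by simp [eraseTop]⟩
  | case2 c C h1 ih =>
    obtain ⟨π, hπ⟩ := ih
    refine ⟨(Equiv.swap c.1 c.2).trans π, fun y => ?_⟩
    rw [runNet_cons, applyComp_of_ge (x := Fin.snoc y true) (by simp [h1]),
      runNet_comp_perm, hπ, eraseTop, dif_pos h1]
    rfl
  | case3 c C h1 h2 ih =>
    obtain ⟨π, hπ⟩ := ih
    refine ⟨π, fun y => ?_⟩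
    rw [runNet_cons, applyComp_of_le (x := Fin.snoc y true) (by simp [h2]),
      hπ, eraseTop, dif_neg h1, dif_pos h2]
  | case4 c C h1 h2 ih =>
    obtain ⟨π, hπ⟩ := ih
    refine ⟨π, fun y => ?_⟩
    have hc := applyComp_castSucc_snoc (c.1.castPred h1, c.2.castPred h2) y true
    simp only [Fin.castSucc_castPred] at hc
    rw [runNet_cons, hc, hπ, eraseTop, dif_neg h1, dif_neg h2]
    rfl

def untangle : List (Fin m × Fin m) → List (Fin m × Fin m)
  | [] => []
  | c :: C =>
    if c.1 < c.2 then c :: untangle C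
    else if c.2 < c.1 then (c.2, c.1) :: untangle (relabel (Equiv.swap c.1 c.2) C)
    else untangle C
termination_by C => C.length
decreasing_by all_goals simp

lemma length_untangle_le (C : List (Fin m × Fin m)) : (untangle C).length ≤ C.length := by
  induction C using untangle.induct with
  | case1 => simp [untangle]
  | case2 c C h ih => simpa [untangle, h] using ih
  | case3 c C h h' ih => simpa [untangle, h, h'] using ih
  | case4 c C h h' ih => simpa [untangle, h, h'] using ih.trans (Nat.le_succ _)

lemma standard_untangle (C : List (Fin m × Fin m)) : Standard (untangle C) := by
  induction C using untangle.induct with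
  | case1 => simp [Standard, untangle]
  | case2 c C h ih =>
    rw [untangle, if_pos h]
    exact List.forall_mem_cons.2 ⟨h, ih⟩
  | case3 c C h h' ih =>
    rw [untangle, if_neg h, if_pos h']
    exact List.forall_mem_cons.2 ⟨h', ih⟩
  | case4 c C h h' ih => rwa [untangle, if_neg h, if_neg h']

lemma exists_runNet_untangle (C : List (Fin m × Fin m)) :
    ∃ π : Equiv.Perm (Fin m), ∀ x : Fin m → Bool,
      runNet (untangle C) x = runNet C x ∘ π := by
  induction C using untangle.induct with
  | case1 => exact ⟨1, fun x => by simp [untangle]⟩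
  | case2 c C h ih =>
    obtain ⟨π, hπ⟩ := ih
    exact ⟨π, fun x => by rw [untangle, if_pos h, runNet_cons, runNet_cons, hπ]⟩
  | case3 c C h h' ih =>
    obtain ⟨π, hπ⟩ := ih
    refine ⟨π.trans (Equiv.swap c.1 c.2), fun x => ?_⟩
    rw [untangle, if_neg h, if_pos h', runNet_cons, runNet_cons, hπ, applyComp_swap c.1 c.2,
      runNet_comp_perm]
    funext i
    simp
  | case4 c C h h' ih =>
    obtain ⟨π, hπ⟩ := ih
    have hc : c.1 = c.2 := le_antisymm (not_lt.1 h') (not_lt.1 h)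
    refine ⟨π, fun x => ?_⟩
    rw [untangle, if_neg h, if_neg h', runNet_cons, applyComp_of_le (le_of_eq (congrArg x hc)),
      hπ]

end Reduction

/-- The outputs of `E` depend only on the number of ones of the input, and `E` fixes sorted
inputs. -/
lemma isSortingNet_of_runNet_eq_comp {m k : ℕ} {C : List (Fin k × Fin k)} (hC : IsSortingNet C)
    {E : List (Fin m × Fin m)} (hE : Standard E) (T : (Fin m → Bool) → Fin k → Bool)
    (hT : ∀ y y', ones y = ones y' → ones (T y) = ones (T y')) (g : Fin m → Fin k)
    (hg : ∀ y, runNet E y = runNet C (T y) ∘ g) : IsSortingNet E := by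
  refine ⟨hE, fun y => ?_⟩
  set y' := runNet (selectionSort m) y
  have hy' : Monotone y' := (isSortingNet_selectionSort m).2 y
  have hCT : runNet C (T y) = runNet C (T y') := (hC.2 _).eq_of_ones_eq (hC.2 _) (by
    rw [ones_runNet, ones_runNet, hT y y' (ones_runNet _ _).symm])
  rw [hg, hCT, ← hg, runNet_of_standard_of_monotone hE hy']
  exact hy'

lemma exists_isSortingNet_length_add_tokenHits_le {n : ℕ} {C : List (Fin (n + 1) × Fin (n + 1))}
    (hC : IsSortingNet C) (j : Fin (n + 1)) :
    ∃ E : List (Fin n × Fin n), IsSortingNet E ∧ E.length + tokenHits j C ≤ C.length := by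
  set σ := Equiv.swap j (Fin.last n)
  set D := eraseTop (relabel σ C)
  obtain ⟨π₁, hπ₁⟩ := exists_runNet_snoc_true_eq_eraseTop (relabel σ C)
  obtain ⟨π₂, hπ₂⟩ := exists_runNet_untangle D
  have hsort : IsSortingNet (untangle D) := by
    refine isSortingNet_of_runNet_eq_comp hC (standard_untangle D) (fun y => Fin.snoc y true ∘ σ)
      (fun y y' h => by simp only [ones_comp_perm, ones_snoc_true, h])
      (fun i => σ.symm (π₁.symm (π₂ i).castSucc)) fun y => ?_
    funext i
    simp [D, hπ₂, runNet_comp_perm, hπ₁]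
  have hhits : tokenHits (Fin.last n) (relabel σ C) = tokenHits j C := by
    simpa [σ] using tokenHits_relabel σ.injective j C
  have hD := length_eraseTop_add_tokenHits (relabel σ C)
  rw [hhits, length_relabel] at hD
  exact ⟨untangle D, hsort, by linarith [length_untangle_le D]⟩

theorem vanVoorhis_general (n : ℕ) :
    sortSize n + Nat.clog 2 n ≤ sortSize (n + 1) := by
  obtain ⟨C, hC, hClen⟩ := exists_isSortingNet_length_eq_sortSize (n + 1)
  obtain ⟨j, hj⟩ := exists_le_two_pow_tokenHits hC
  obtain ⟨E, hE, hElen⟩ := exists_isSortingNet_length_add_tokenHits_le hC j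
  have hsortSize : sortSize n ≤ E.length := Nat.sInf_le ⟨E, hE, rfl⟩
  have hclog : Nat.clog 2 n ≤ tokenHits j C :=
    (Nat.clog_mono_right 2 n.le_succ).trans ((Nat.clog_le_iff_le_pow one_lt_two).2 hj)
  omega

/-- Van Voorhis' lemma: `S(n+1) ≥ S(n) + ⌈log₂ n⌉` for every `n ≥ 1`. -/
theorem vanVoorhis (n : ℕ) (hn : 1 ≤ n) :
    sortSize n + Nat.clog 2 n ≤ sortSize (n + 1) :=
  vanVoorhis_general n
end

section
/- Let C_a and C_b be comparator networks on n channels. If for some x ∈ {0,1} and some 0 ≤ k ≤ n the cardinality of w(C_a,x,k) is strictly greater than the cardinality of w(C_b,x,k), then C_a does not subsume C_b. -/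
/-- If for some `x ∈ {0,1}` and `0 ≤ k ≤ n` the set `w(Ca,x,k)` is strictly larger than
`w(Cb,x,k)`, then `Ca` does not subsume `Cb`. -/
theorem not_subsumes_of_card_wSet (n : ℕ) (Ca Cb : List (Fin n × Fin n))
    (hCa : Standard Ca) (hCb : Standard Cb)
    (h : ∃ (x : Bool) (k : ℕ), k ≤ n ∧ (wSet Cb x k).ncard < (wSet Ca x k).ncard) :
    ¬ Subsumes Ca Cb := by
  rintro ⟨π, hπ⟩
  obtain ⟨x, k, hk, hlt⟩ := h
  have hsub : (⇑π) '' wSet Ca x k ⊆ wSet Cb x k := by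
    rintro _ ⟨i, ⟨v, hv, hones, hvi⟩, rfl⟩
    refine ⟨v ∘ ⇑π.symm, hπ ⟨v, hv, rfl⟩, ?_, by simp [hvi]⟩
    rw [← hones]
    exact Finset.card_equiv π.symm (by simp [Function.comp])
  have h1 : (wSet Ca x k).ncard = ((⇑π) '' wSet Ca x k).ncard :=
    (Set.ncard_image_of_injective _ π.injective).symm
  have h2 : ((⇑π) '' wSet Ca x k).ncard ≤ (wSet Cb x k).ncard :=
    Set.ncard_le_ncard hsub (Set.toFinite _)
  omega
end

section
/- Let C_a and C_b be comparator networks on n channels and π a permutation of {1,…,n}. If π(outputs(C_a)) ⊆ outputs(C_b), then π(w(C_a,x,k)) ⊆ w(C_b,x,k) for all x ∈ {0,1} and all 1 ≤ k ≤ n. -/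
/-- If `π(outputs Ca) ⊆ outputs Cb`, then `π(w(Ca,x,k)) ⊆ w(Cb,x,k)` for all
`x ∈ {0,1}` and `1 ≤ k ≤ n`. -/
theorem perm_image_wSet_subset (n : ℕ) (Ca Cb : List (Fin n × Fin n))
    (hCa : Standard Ca) (hCb : Standard Cb) (π : Equiv.Perm (Fin n))
    (h : permSet π (outputs Ca) ⊆ outputs Cb) :
    ∀ (x : Bool) (k : ℕ), 1 ≤ k → k ≤ n → ⇑π '' wSet Ca x k ⊆ wSet Cb x k := by
  intro x k _ _ j hj
  obtain ⟨i, ⟨v, hv, hones, hvi⟩, rfl⟩ := hj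
  refine ⟨v ∘ ⇑π.symm, h ⟨v, hv, rfl⟩, ?_, by simpa using hvi⟩
  rw [← hones]
  unfold ones
  apply Finset.card_bij (fun a _ => π.symm a)
  · intro a ha; simpa using Finset.mem_filter.mp ha |>.2
  · intro a _ b _ hab; exact π.symm.injective hab
  · intro b hb
    exact ⟨π b, Finset.mem_filter.mpr ⟨Finset.mem_univ _, by simpa using Finset.mem_filter.mp hb |>.2⟩, by simp⟩
end

section
/- (Zero-one principle) Let C be a comparator network on n channels that sorts every Boolean input, i.e., C(x) is sorted in ascending order for every x ∈ {0,1}^n. Then for every linearly ordered set α and every input vector v ∈ α^n, the output of C on v (where each comparator acts by replacing (v_i, v_j) with (min(v_i,v_j), max(v_i,v_j))) is sorted in ascending order. -/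

lemma applyComp_comm {n : ℕ} {α β : Type*} [LinearOrder α] [LinearOrder β]
    {f : α → β} (hf : Monotone f) (c : Fin n × Fin n) (x : Fin n → α) :
    applyComp c (f ∘ x) = f ∘ applyComp c x := by
  funext k
  simp only [applyComp, Function.comp]
  split_ifs <;> simp [hf.map_min, hf.map_max]

lemma runNet_comm {n : ℕ} {α β : Type*} [LinearOrder α] [LinearOrder β]
    {f : α → β} (hf : Monotone f) (C : List (Fin n × Fin n)) (x : Fin n → α) :
    runNet C (f ∘ x) = f ∘ runNet C x := by
  induction C generalizing x with
  | nil => rfl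
  | cons c t ih =>
    simp only [runNet, List.foldl_cons] at *
    rw [applyComp_comm hf, ih]

/-- Zero-one principle: a comparator network sorting all Boolean inputs sorts all inputs
over any linearly ordered set. -/
theorem zero_one_principle (n : ℕ) (C : List (Fin n × Fin n)) (hC : Standard C)
    (hsorts : ∀ x : Fin n → Bool, Monotone (runNet C x))
    (α : Type*) [LinearOrder α] (v : Fin n → α) :
    Monotone (runNet C v) := by
  intro i j hij
  by_contra h
  push_neg at h
  set w := runNet C v with hw
  have hf : Monotone (fun a : α => decide (w j < a)) := by
    intro a b hab
    simp only [Bool.le_iff_imp, decide_eq_true_eq]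
    intro hlt; exact lt_of_lt_of_le hlt hab
  have := runNet_comm hf C v
  have hmono := hsorts ((fun a : α => decide (w j < a)) ∘ v) hij
  rw [this] at hmono
  simp only [Function.comp, ← hw] at hmono
  simp [h, lt_irrefl] at hmono
  exact absurd hmono (by decide)
end
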